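/- For every positive real constant d and every real number x, the saturation error of the normalized Gaussian-shift sum as an approximation of the constant function 1 satisfies |(1/√(πd)) · Σ_{n∈ℤ} exp(−(x − n)²/d) − 1| < csch(π²d), where csch denotes the hyperbolic cosecant. -/

import Mathlib

/-!
By Poisson summation (Jacobi's theta transformation) the normalized sum equals
`∑ₙ exp(-π²d n²) e^{-2πinx}`, whose `n = 0` term is `1`. The error is therefore at most
`2 ∑_{k ≥ 1} exp(-π²d k²)`, and since `k² ≥ 2k - 1`, with strict inequality at `k = 2`, this is
less than the geometric series `2 ∑_{k ≥ 0} exp(-π²d (2k + 1)) = csch(π²d)`.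
-/

noncomputable def csch (a : ℝ) : ℝ := 2 / (Real.exp a - Real.exp (-a))

open Real

theorem hasSum_exp_neg_mul_odd {a : ℝ} (ha : 0 < a) :
    HasSum (fun k : ℕ => rexp (-a * (2 * k + 1))) (csch a / 2) := by
  have hr : rexp (-2 * a) < 1 := exp_lt_one_iff.mpr (by linarith)
  have hterm (k : ℕ) : rexp (-a * (2 * k + 1)) = rexp (-a) * rexp (-2 * a) ^ k := by
    rw [← exp_nat_mul, ← exp_add]
    ring_nf
  have hsum : rexp (-a) * (1 - rexp (-2 * a))⁻¹ = csch a / 2 := by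
    have hsq : rexp (-2 * a) = rexp (-a) ^ 2 := by rw [← exp_nat_mul]; ring_nf
    have hpos : 0 < 1 - rexp (-a) ^ 2 := hsq ▸ sub_pos.mpr hr
    rw [csch, hsq, ← inv_inv (rexp a), ← exp_neg]
    field_simp
  rw [funext hterm, ← hsum]
  exact (hasSum_geometric_of_lt_one (exp_pos _).le hr).mul_left _

theorem exp_neg_mul_sq_neg_succ (a : ℝ) (k : ℕ) :
    rexp (-a * ((-(k + 1) : ℤ) : ℝ) ^ 2) = rexp (-a * (k + 1) ^ 2) := by
  push_cast
  ring_nf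

theorem summable_exp_neg_mul_succ_sq {a : ℝ} (ha : 0 < a) :
    Summable fun k : ℕ => rexp (-a * (k + 1) ^ 2) := by
  refine (hasSum_exp_neg_mul_odd ha).summable.of_nonneg_of_le (fun _ => (exp_pos _).le) fun k => ?_
  rw [exp_le_exp]
  nlinarith [mul_nonneg ha.le (sq_nonneg (k : ℝ))]

theorem tsum_exp_neg_mul_succ_sq_lt {a : ℝ} (ha : 0 < a) :
    ∑' k : ℕ, rexp (-a * (k + 1) ^ 2) < csch a / 2 := by
  refine hasSum_lt (i := 1) (fun k => ?_) ?_ (summable_exp_neg_mul_succ_sq ha).hasSum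
    (hasSum_exp_neg_mul_odd ha)
  · rw [exp_le_exp]
    nlinarith [mul_nonneg ha.le (sq_nonneg (k : ℝ))]
  · rw [exp_lt_exp]
    norm_num
    linarith

theorem summable_exp_neg_mul_int_sq {a : ℝ} (ha : 0 < a) :
    Summable fun n : ℤ => rexp (-a * n ^ 2) :=
  .of_add_one_of_neg_add_one (by exact_mod_cast summable_exp_neg_mul_succ_sq ha)
    (by simpa only [exp_neg_mul_sq_neg_succ] using summable_exp_neg_mul_succ_sq ha)

theorem tsum_exp_neg_mul_int_sq_lt {a : ℝ} (ha : 0 < a) :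
    ∑' n : ℤ, rexp (-a * n ^ 2) < 1 + csch a := by
  rw [tsum_of_add_one_of_neg_add_one (by exact_mod_cast summable_exp_neg_mul_succ_sq ha)
    (by simpa only [exp_neg_mul_sq_neg_succ] using summable_exp_neg_mul_succ_sq ha)]
  simp only [exp_neg_mul_sq_neg_succ, Int.cast_add, Int.cast_natCast, Int.cast_one, Int.cast_zero,
    zero_pow two_ne_zero, mul_zero, exp_zero]
  linarith [tsum_exp_neg_mul_succ_sq_lt ha]

theorem norm_tsum_sub_le_tsum_sub {ι E : Type*} [NormedAddCommGroup E] [CompleteSpace E]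
    {f : ι → E} {g : ι → ℝ} (hg : Summable g) (hfg : ∀ n, ‖f n‖ ≤ g n) (i : ι) :
    ‖∑' n, f n - f i‖ ≤ ∑' n, g n - g i := by
  classical
  rw [← (hasSum_ite_sub_hasSum (hg.of_norm_bounded hfg).hasSum i).tsum_eq]
  refine tsum_of_norm_bounded (hasSum_ite_sub_hasSum hg.hasSum i) fun n => ?_
  split_ifs
  · simp
  · exact hfg n

-- Jacobi's transformation with `a = 1/(πd)`, `b = x/(πd)`: each side picks up the factor
-- `exp(x²/d)`, which is then cancelled.
theorem tsum_exp_neg_sq_div_eq {d : ℝ} (hd : 0 < d) (x : ℝ) :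
    ((∑' n : ℤ, rexp (-(x - n) ^ 2 / d) : ℝ) : ℂ) =
      √(π * d) *
        ∑' n : ℤ, rexp (-(π ^ 2 * d) * n ^ 2) * Complex.exp (-(2 * π * n * x) * Complex.I) := by
  have hπd : 0 < π * d := by positivity
  have hd' : (d : ℂ) ≠ 0 := Complex.ofReal_ne_zero.mpr hd.ne'
  set a : ℂ := (((π * d)⁻¹ : ℝ) : ℂ)
  set b : ℂ := ((x / (π * d) : ℝ) : ℂ)
  have ha : 0 < a.re := by rw [Complex.ofReal_re]; positivity
  have hsqrt : 1 / a ^ (1 / 2 : ℂ) = √(π * d) := by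
    rw [show (1 / 2 : ℂ) = ((1 / 2 : ℝ) : ℂ) by norm_num, ← Complex.ofReal_cpow (by positivity),
      inv_rpow hπd.le, ← sqrt_eq_rpow, one_div, ← Complex.ofReal_inv, inv_inv]
  have hlhs (n : ℤ) : Complex.exp (-π * a * n ^ 2 + 2 * π * b * n) =
      Complex.exp (x ^ 2 / d) * rexp (-(x - n) ^ 2 / d) := by
    rw [Complex.ofReal_exp, ← Complex.exp_add]
    congr 1
    simp only [a, b]
    push_cast
    field_simp
    ring
  have hrhs (n : ℤ) : Complex.exp (-π / a * (n + Complex.I * b) ^ 2) =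
      Complex.exp (x ^ 2 / d) *
        (rexp (-(π ^ 2 * d) * n ^ 2) * Complex.exp (-(2 * π * n * x) * Complex.I)) := by
    rw [Complex.ofReal_exp, ← Complex.exp_add, ← Complex.exp_add]
    congr 1
    simp only [a, b]
    push_cast
    field_simp
    linear_combination (-(x : ℂ) ^ 2) * Complex.I_sq
  have key := Complex.tsum_exp_neg_quadratic ha b
  simp only [hlhs, hrhs, tsum_mul_left, hsqrt] at key
  rw [Complex.ofReal_tsum]
  exact mul_left_cancel₀ (Complex.exp_ne_zero _) (key.trans (mul_left_comm _ _ _))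

/-- For every `d > 0` and every real `x`, the saturation error of the normalized
Gaussian-shift sum approximating the constant function `1` satisfies
`|(1/√(πd)) · Σ_{n∈ℤ} exp(−(x − n)²/d) − 1| < csch(π²d)`. -/
theorem gaussian_saturation_error_lt_csch (d : ℝ) (hd : 0 < d) (x : ℝ) :
    |(1 / Real.sqrt (Real.pi * d)) * (∑' n : ℤ, Real.exp (-(x - n) ^ 2 / d)) - 1| <
      csch (Real.pi ^ 2 * d) := by
  have ha : 0 < π ^ 2 * d := by positivity
  have hsqrt : 0 < √(π * d) := by positivity
  set θ : ℤ → ℂ := fun n =>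
    rexp (-(π ^ 2 * d) * n ^ 2) * Complex.exp (-(2 * π * n * x) * Complex.I)
  have hθ (n : ℤ) : ‖θ n‖ = rexp (-(π ^ 2 * d) * n ^ 2) := by
    simp only [θ, norm_mul, Complex.norm_real, Complex.norm_exp, norm_of_nonneg (exp_pos _).le]
    rw [Complex.mul_I_re]
    simp
  calc |(1 / √(π * d)) * (∑' n : ℤ, rexp (-(x - n) ^ 2 / d)) - 1|
      = ‖∑' n, θ n - θ 0‖ := by
        rw [← Real.norm_eq_abs, ← Complex.norm_real, Complex.ofReal_sub, Complex.ofReal_mul,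
          tsum_exp_neg_sq_div_eq hd x]
        have hθ0 : θ 0 = 1 := by simp [θ]
        rw [hθ0, ← mul_assoc, ← Complex.ofReal_mul, one_div_mul_cancel hsqrt.ne',
          Complex.ofReal_one, one_mul]
    _ ≤ ∑' n : ℤ, rexp (-(π ^ 2 * d) * n ^ 2) - rexp (-(π ^ 2 * d) * (0 : ℤ) ^ 2) :=
        norm_tsum_sub_le_tsum_sub (summable_exp_neg_mul_int_sq ha) (fun n => (hθ n).le) 0
    _ < csch (π ^ 2 * d) := by
        simpa [sub_lt_iff_lt_add'] using tsum_exp_neg_mul_int_sq_lt ha
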